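/- arXiv:1602.05941 — 2 statements merged into one kernel-verified Lean document; each statement's English description precedes it below -/
import Mathlib

section
/- Suppose A_E = [A₁, A₂E] ∈ ℝ^{m×(N₁+Nᴸ)} admits robust k-sparse recovery with constant C, i.e., for any k-sparse z* with ‖y − A_E z*‖₂ ≤ ε, every minimizer z̃ of min ‖z‖₁ subject to ‖y − A_E z‖₂ ≤ ε satisfies ‖z̃ − z*‖₂ ≤ Cε. Let x* = x₁* + x₂* be k-sparse with y = A₁x₁* + A₂x₂*, and define ε_L = min{‖A₂(E xᴸ − x₂*)‖₂ : ‖xᴸ‖₀ ≤ ‖x₂*‖₀}. Then any solution (x̃₁, x̃ᴸ) of the multi-resolution problem min ‖(x₁,xᴸ)‖₁ subject to ‖y − A₁x₁ − A₂E xᴸ‖₂ ≤ ε_L satisfies ‖x̃₁ − x₁*‖₂ ≤ C·ε_L. -/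
noncomputable def l2norm {ι : Type*} [Fintype ι] (v : ι → ℝ) : ℝ :=
  Real.sqrt (∑ i, v i ^ 2)

noncomputable def l1norm {ι : Type*} [Fintype ι] (v : ι → ℝ) : ℝ :=
  ∑ i, |v i|

noncomputable def l0norm {ι : Type*} (v : ι → ℝ) : ℕ :=
  (Function.support v).ncard

lemma l0_elim {α β : Type*} [Fintype α] [Fintype β] (u : α → ℝ) (v : β → ℝ) :
    l0norm (Sum.elim u v) = l0norm u + l0norm v := by
  unfold l0norm
  have hs : Function.support (Sum.elim u v)
      = Sum.inl '' Function.support u ∪ Sum.inr '' Function.support v := by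
    ext x
    cases x with
    | inl a => simp [Function.mem_support]
    | inr b => simp [Function.mem_support]
  rw [hs, Set.ncard_union_eq, Set.ncard_image_of_injective _ Sum.inl_injective,
    Set.ncard_image_of_injective _ Sum.inr_injective]
  · exact (Set.disjoint_left.mpr (by rintro x ⟨a, _, rfl⟩ ⟨b, _, h⟩; exact Sum.inr_ne_inl h))

lemma l2_inl {N1 NL : ℕ} (w : Fin N1 ⊕ Fin NL → ℝ) :
    l2norm (fun i => w (Sum.inl i)) ≤ l2norm w := by
  unfold l2norm
  apply Real.sqrt_le_sqrt
  rw [Fintype.sum_sum_type]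
  have : (0:ℝ) ≤ ∑ i : Fin NL, w (Sum.inr i) ^ 2 :=
    Finset.sum_nonneg fun _ _ => sq_nonneg _
  linarith

lemma l2_neg {ι : Type*} [Fintype ι] (v : ι → ℝ) : l2norm (-v) = l2norm v := by
  unfold l2norm
  simp

/-- main proposition. If `A_E = [A₁, A₂E]` admits robust k-sparse recovery with
constant `C`, `x* = x₁* + x₂*` is k-sparse, `y = A₁x₁* + A₂x₂*`, and `ε_L` is the attained
minimum of `‖A₂(ExL − x₂*)‖₂` over `‖xL‖₀ ≤ ‖x₂*‖₀`, then every solution of the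
multi-resolution problem with tolerance `ε_L` satisfies `‖x̃₁ − x₁*‖₂ ≤ C ε_L`. -/
theorem stmt2 (m N1 N2 NL k : ℕ) (C : ℝ)
    (A1 : Matrix (Fin m) (Fin N1) ℝ) (A2 : Matrix (Fin m) (Fin N2) ℝ)
    (E : Matrix (Fin N2) (Fin NL) ℝ)
    (AE : (Fin N1 ⊕ Fin NL → ℝ) → (Fin m → ℝ))
    (hAE : ∀ z, AE z = A1.mulVec (z ∘ Sum.inl) + A2.mulVec (E.mulVec (z ∘ Sum.inr)))
    -- robust k-sparse recovery for A_E with constant C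
    (hRobust : ∀ (zstar : Fin N1 ⊕ Fin NL → ℝ) (y' : Fin m → ℝ) (ε : ℝ), 0 ≤ ε →
      l0norm zstar ≤ k → l2norm (y' - AE zstar) ≤ ε →
      ∀ zt : Fin N1 ⊕ Fin NL → ℝ,
        (l2norm (y' - AE zt) ≤ ε ∧
          ∀ z, l2norm (y' - AE z) ≤ ε → l1norm zt ≤ l1norm z) →
        l2norm (zt - zstar) ≤ C * ε)
    (x1s : Fin N1 → ℝ) (x2s : Fin N2 → ℝ)
    (hsparse : l0norm (Sum.elim x1s x2s) ≤ k)
    (y : Fin m → ℝ) (hy : y = A1.mulVec x1s + A2.mulVec x2s)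
    (εL : ℝ)
    (hεL : IsLeast {t : ℝ | ∃ xL : Fin NL → ℝ, l0norm xL ≤ l0norm x2s ∧
      t = l2norm (A2.mulVec (E.mulVec xL - x2s))} εL) :
    ∀ xt : Fin N1 ⊕ Fin NL → ℝ,
      (l2norm (y - AE xt) ≤ εL ∧
        ∀ z, l2norm (y - AE z) ≤ εL → l1norm xt ≤ l1norm z) →
      l2norm (fun i => xt (Sum.inl i) - x1s i) ≤ C * εL := by
  intro xt hxt
  obtain ⟨⟨xLs, hxL0, hxLval⟩, -⟩ := hεL
  have hε0 : 0 ≤ εL := hxLval ▸ Real.sqrt_nonneg _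
  set zstar : Fin N1 ⊕ Fin NL → ℝ := Sum.elim x1s xLs with hz
  have hz0 : l0norm zstar ≤ k := by
    rw [hz, l0_elim]
    calc l0norm x1s + l0norm xLs ≤ l0norm x1s + l0norm x2s := by omega
    _ = l0norm (Sum.elim x1s x2s) := (l0_elim _ _).symm
    _ ≤ k := hsparse
  have hfeas : l2norm (y - AE zstar) ≤ εL := by
    have : y - AE zstar = -(A2.mulVec (E.mulVec xLs - x2s)) := by
      rw [hAE, hy]
      have h1 : (zstar ∘ Sum.inl) = x1s := rfl
      have h2 : (zstar ∘ Sum.inr) = xLs := rfl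
      rw [h1, h2, Matrix.mulVec_sub]
      ext i
      simp [Pi.sub_apply]
    rw [this, l2_neg, ← hxLval]
  have hmain := hRobust zstar y εL hε0 hz0 hfeas xt hxt
  have hrestrict : l2norm (fun i => xt (Sum.inl i) - x1s i) ≤ l2norm (xt - zstar) := by
    have : (fun i => xt (Sum.inl i) - x1s i) = fun i => (xt - zstar) (Sum.inl i) := by
      ext i; simp [hz]
    rw [this]
    exact l2_inl _
  linarith
end

section
/- Suppose A_E admits robust k-sparse recovery with constant C, x* = x₁* + x₂* is k-sparse with y = A₁x₁* + A₂x₂*, and there exists xᴸ* with ‖xᴸ*‖₀ ≤ ‖x₂*‖₀ and E xᴸ* = x₂* (exact expansion). Then ε_L = 0 and every solution (x̃₁, x̃ᴸ) of the multi-resolution problem with ε = 0 satisfies x̃₁ = x₁* exactly. -/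
lemma l2norm_nonneg {ι : Type*} [Fintype ι] (v : ι → ℝ) : 0 ≤ l2norm v :=
  Real.sqrt_nonneg _

lemma l2norm_zero {ι : Type*} [Fintype ι] : l2norm (0 : ι → ℝ) = 0 := by
  simp [l2norm]

lemma l2norm_eq_zero {ι : Type*} [Fintype ι] {v : ι → ℝ} (h : l2norm v ≤ 0) : v = 0 := by
  have h0 : l2norm v = 0 := le_antisymm h (l2norm_nonneg v)
  have hs : ∑ i, v i ^ 2 = 0 :=
    le_antisymm (Real.sqrt_eq_zero'.mp h0) (Finset.sum_nonneg fun i _ => sq_nonneg _)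
  funext i
  have := (Finset.sum_eq_zero_iff_of_nonneg (fun i _ => sq_nonneg (v i))).mp hs i (Finset.mem_univ i)
  exact pow_eq_zero_iff (by norm_num) |>.mp this

lemma l0norm_sum_elim {α β : Type*} [Finite α] [Finite β] (f : α → ℝ) (g : β → ℝ) :
    l0norm (Sum.elim f g) = l0norm f + l0norm g := by
  unfold l0norm
  have hsup : Function.support (Sum.elim f g) =
      Sum.inl '' Function.support f ∪ Sum.inr '' Function.support g := by
    ext x
    cases x <;> simp [Function.mem_support]
  rw [hsup]
  rw [Set.ncard_union_eq]
  · rw [Set.ncard_image_of_injective _ Sum.inl_injective,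
      Set.ncard_image_of_injective _ Sum.inr_injective]
  · rw [Set.disjoint_iff_inter_eq_empty]
    ext x
    simp only [Set.mem_inter_iff, Set.mem_image, Set.mem_empty_iff_false, iff_false]
    rintro ⟨⟨a, _, rfl⟩, ⟨b, _, h⟩⟩
    exact Sum.inl_ne_inr h.symm

/-- exact expansion case: if `E xᴸ* = x₂*` with `‖xᴸ*‖₀ ≤ ‖x₂*‖₀`, then
`ε_L = 0` and every solution of the multi-resolution problem with `ε = 0` recovers `x₁*`
exactly. -/
theorem stmt5 (m N1 N2 NL k : ℕ) (C : ℝ)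
    (A1 : Matrix (Fin m) (Fin N1) ℝ) (A2 : Matrix (Fin m) (Fin N2) ℝ)
    (E : Matrix (Fin N2) (Fin NL) ℝ)
    (AE : (Fin N1 ⊕ Fin NL → ℝ) → (Fin m → ℝ))
    (hAE : ∀ z, AE z = A1.mulVec (z ∘ Sum.inl) + A2.mulVec (E.mulVec (z ∘ Sum.inr)))
    (hRobust : ∀ (zstar : Fin N1 ⊕ Fin NL → ℝ) (y' : Fin m → ℝ) (ε : ℝ), 0 ≤ ε →
      l0norm zstar ≤ k → l2norm (y' - AE zstar) ≤ ε →
      ∀ zt : Fin N1 ⊕ Fin NL → ℝ,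
        (l2norm (y' - AE zt) ≤ ε ∧
          ∀ z, l2norm (y' - AE z) ≤ ε → l1norm zt ≤ l1norm z) →
        l2norm (zt - zstar) ≤ C * ε)
    (x1s : Fin N1 → ℝ) (x2s : Fin N2 → ℝ)
    (hsparse : l0norm (Sum.elim x1s x2s) ≤ k)
    (y : Fin m → ℝ) (hy : y = A1.mulVec x1s + A2.mulVec x2s)
    (xLs : Fin NL → ℝ) (hxLs0 : l0norm xLs ≤ l0norm x2s)
    (hexact : E.mulVec xLs = x2s)
    (εL : ℝ)
    (hεL : IsLeast {t : ℝ | ∃ xL : Fin NL → ℝ, l0norm xL ≤ l0norm x2s ∧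
      t = l2norm (A2.mulVec (E.mulVec xL - x2s))} εL) :
    εL = 0 ∧
    ∀ xt : Fin N1 ⊕ Fin NL → ℝ,
      (l2norm (y - AE xt) ≤ 0 ∧
        ∀ z, l2norm (y - AE z) ≤ 0 → l1norm xt ≤ l1norm z) →
      (fun i => xt (Sum.inl i)) = x1s := by
  have hmem : (0:ℝ) ∈ {t : ℝ | ∃ xL : Fin NL → ℝ, l0norm xL ≤ l0norm x2s ∧
      t = l2norm (A2.mulVec (E.mulVec xL - x2s))} := by
    exact ⟨xLs, hxLs0, by simp [hexact, l2norm_zero]⟩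
  have hεL0 : εL = 0 := by
    have hle : εL ≤ 0 := hεL.2 hmem
    obtain ⟨xL, _, ht⟩ := hεL.1
    have : 0 ≤ εL := ht ▸ l2norm_nonneg _
    linarith
  refine ⟨hεL0, ?_⟩
  intro xt hxt
  set zstar : Fin N1 ⊕ Fin NL → ℝ := Sum.elim x1s xLs with hz
  have hsp : l0norm zstar ≤ k := by
    rw [hz, l0norm_sum_elim]
    calc l0norm x1s + l0norm xLs ≤ l0norm x1s + l0norm x2s := by omega
    _ = l0norm (Sum.elim x1s x2s) := (l0norm_sum_elim _ _).symm
    _ ≤ k := hsparse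
  have hAEz : AE zstar = y := by
    rw [hAE]
    simp [hz, hexact, hy]
  have hfit : l2norm (y - AE zstar) ≤ 0 := by
    rw [hAEz]
    simp [l2norm_zero]
  have hrec := hRobust zstar y 0 le_rfl hsp hfit xt hxt
  rw [mul_zero] at hrec
  have : xt - zstar = 0 := l2norm_eq_zero hrec
  funext i
  have hi := congrFun this (Sum.inl i)
  simpa [hz, sub_eq_zero] using hi
end
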